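/- Let P be a probability distribution on ℝ^d × {−1,1} and let f, f' : ℝ^d → ℝ be measurable. Suppose E_{X∼P_X}[r(|f(X)|)] ≤ α and E_{X∼P_X}[r(sign(f(X))·f'(X))] ≤ E_{X∼P_X}[r(|f(X)|)]. Then E_{(X,Y)∼P}[r(Y·f'(X))] ≤ E_{(X,Y)∼P}[r(Y·f(X))] + α. -/

import Mathlib

open MeasureTheory

noncomputable section

/-- `ℝ^d` with the Euclidean norm. -/
abbrev Euc (d : ℕ) : Type := EuclideanSpace ℝ (Fin d)

/-- The ramp loss: `r(m) = 1` for `m ≤ 0`, `1 - m` for `0 ≤ m ≤ 1`, `0` for `m ≥ 1`. -/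
def ramp (m : ℝ) : ℝ := max 0 (min 1 (1 - m))

/-- `sign(t) = 1` if `t ≥ 0`, `-1` otherwise. -/
def sgn (t : ℝ) : ℝ := if 0 ≤ t then 1 else -1

/-- The linear model `M_θ(x) = ⟨w, x⟩ + b` for `θ = (w, b)`. -/
def model {d : ℕ} (θ : Euc d × ℝ) (x : Euc d) : ℝ := (inner ℝ θ.1 x : ℝ) + θ.2

/-- Ramp loss of a linear model on a distribution over `ℝ^d × {-1,1}`. -/
def lossR {d : ℕ} (θ : Euc d × ℝ) (P : Measure (Euc d × ℝ)) : ℝ :=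
  ∫ p, ramp (p.2 * model θ p.1) ∂P

/-- 0-1 error of a linear model on a distribution over `ℝ^d × {-1,1}`. -/
def errP {d : ℕ} (θ : Euc d × ℝ) (P : Measure (Euc d × ℝ)) : ℝ :=
  (P {p | sgn (model θ p.1) ≠ p.2}).toReal

/-- Pseudolabeled ramp loss of `θ'` on the `X`-marginal of `Q`, with pseudolabels from `θ`. -/
def pseudoLossR {d : ℕ} (θ θ' : Euc d × ℝ) (Q : Measure (Euc d × ℝ)) : ℝ :=
  ∫ x, ramp (sgn (model θ x) * model θ' x) ∂(Q.map Prod.fst)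

/-- `Q` is a `ρ`-shift of `P`: there are measurable maps `f₋₁, f₁`, each moving every point by
at most `ρ`, such that `Q` is the law of `(f_Y(X), Y)` for `(X, Y) ∼ P`. -/
def IsShift {d : ℕ} (P Q : Measure (Euc d × ℝ)) (ρ : ℝ) : Prop :=
  ∃ fneg fpos : Euc d → Euc d, Measurable fneg ∧ Measurable fpos ∧
    (∀ x, ‖fneg x - x‖ ≤ ρ) ∧ (∀ x, ‖fpos x - x‖ ≤ ρ) ∧
    Q = P.map (fun p => (if p.2 = 1 then fpos p.1 else fneg p.1, p.2))

lemma ramp_nonneg (m : ℝ) : 0 ≤ ramp m := le_max_left _ _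

lemma ramp_le_one (m : ℝ) : ramp m ≤ 1 := by
  unfold ramp
  exact max_le zero_le_one (min_le_left _ _)

lemma ramp_of_nonpos {m : ℝ} (hm : m ≤ 0) : ramp m = 1 := by
  unfold ramp
  rw [min_eq_left (by linarith), max_eq_right zero_le_one]

lemma ramp_continuous : Continuous ramp :=
  continuous_const.max (continuous_const.min (continuous_const.sub continuous_id))

lemma ramp_measurable : Measurable ramp := ramp_continuous.measurable

lemma sgn_measurable : Measurable sgn := by
  unfold sgn
  exact Measurable.ite (measurableSet_le measurable_const measurable_id)
    measurable_const measurable_const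

lemma ramp_key {y a b : ℝ} (hy : y = 1 ∨ y = -1) :
    ramp (y * b) ≤ ramp (sgn a * b) + ramp (y * a) := by
  by_cases h : sgn a = y
  · rw [h]
    exact le_add_of_nonneg_right (ramp_nonneg _)
  · have hya : y * a ≤ 0 := by
      unfold sgn at h
      rcases hy with hy | hy <;> subst hy <;> split at h <;>
        first | simp at h | nlinarith
    calc ramp (y * b) ≤ 1 := ramp_le_one _
      _ = ramp (y * a) := (ramp_of_nonpos hya).symm
      _ ≤ _ := le_add_of_nonneg_left (ramp_nonneg _)

/-- Upper bounding loss growth: if the unlabeled loss of `f` is at most `α` and `f'` does at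
least as well as `f` on `f`'s pseudolabels, then the labeled loss grows by at most `α`. -/
theorem stmt11 {d : ℕ} (P : Measure (Euc d × ℝ)) [IsProbabilityMeasure P]
    (hlab : P {p | p.2 = 1 ∨ p.2 = -1} = 1)
    (f f' : Euc d → ℝ) (hf : Measurable f) (hf' : Measurable f') (α : ℝ)
    (hα : ∫ x, ramp |f x| ∂(P.map Prod.fst) ≤ α)
    (hst : ∫ x, ramp (sgn (f x) * f' x) ∂(P.map Prod.fst) ≤ ∫ x, ramp |f x| ∂(P.map Prod.fst)) :
    ∫ p, ramp (p.2 * f' p.1) ∂P ≤ (∫ p, ramp (p.2 * f p.1) ∂P) + α := by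
  have hS : MeasurableSet {p : Euc d × ℝ | p.2 = 1 ∨ p.2 = -1} :=
    ((measurable_snd (measurableSet_singleton 1)).union
      (measurable_snd (measurableSet_singleton (-1))))
  have hae : ∀ᵐ p ∂P, p.2 = 1 ∨ p.2 = -1 := by
    rw [ae_iff]
    have := measure_compl hS (measure_ne_top P _)
    simp only [hlab, measure_univ, tsub_self] at this
    simpa [Set.compl_setOf] using this
  -- measurability / integrability facts
  have m1 : Measurable fun p : Euc d × ℝ => ramp (p.2 * f' p.1) :=
    ramp_measurable.comp (measurable_snd.mul (hf'.comp measurable_fst))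
  have m2 : Measurable fun p : Euc d × ℝ => ramp (sgn (f p.1) * f' p.1) :=
    ramp_measurable.comp
      (((sgn_measurable.comp hf).comp measurable_fst).mul (hf'.comp measurable_fst))
  have m3 : Measurable fun p : Euc d × ℝ => ramp (p.2 * f p.1) :=
    ramp_measurable.comp (measurable_snd.mul (hf.comp measurable_fst))
  have ibd : ∀ g : Euc d × ℝ → ℝ, Measurable g → (∀ p, |g p| ≤ 1) → Integrable g P := by
    intro g hg hb
    exact (integrable_const (1 : ℝ)).mono' hg.aestronglyMeasurable (ae_of_all _ hb)
  have bd : ∀ m : ℝ, |ramp m| ≤ 1 := fun m =>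
    abs_le.2 ⟨by linarith [ramp_nonneg m], ramp_le_one m⟩
  have i1 := ibd _ m1 fun p => bd _
  have i2 := ibd _ m2 fun p => bd _
  have i3 := ibd _ m3 fun p => bd _
  have hmono : ∫ p, ramp (p.2 * f' p.1) ∂P ≤
      ∫ p, (ramp (sgn (f p.1) * f' p.1) + ramp (p.2 * f p.1)) ∂P := by
    refine integral_mono_ae i1 (i2.add i3) ?_
    filter_upwards [hae] with p hp
    exact ramp_key hp
  rw [integral_add i2 i3] at hmono
  have hmap : ∫ p, ramp (sgn (f p.1) * f' p.1) ∂P =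
      ∫ x, ramp (sgn (f x) * f' x) ∂(P.map Prod.fst) := by
    exact (integral_map measurable_fst.aemeasurable
      (ramp_measurable.comp ((sgn_measurable.comp hf).mul hf')).aestronglyMeasurable).symm
  rw [hmap] at hmono
  linarith
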